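/- arXiv:2302.09273 — 3 statements merged into one kernel-verified Lean document; each statement's English description precedes it below -/
import Mathlib

section
/- Let S be a nonempty finite state space and A a nonempty finite action space, let r : S × A → ℝ be a reward function with r(s,a) ∈ [0,1] for all (s,a), and let γ ∈ [0,1) be a discount factor. Let T₁ and T₂ be two transition kernels on (S, A) that are ε-close in L1, i.e. Σ_{s'∈S} |T₁(s,a,s') − T₂(s,a,s')| ≤ ε for every (s,a) ∈ S × A. Then for every deterministic stationary policy π : S → A and every state s ∈ S, |V^π_{T₁}(s) − V^π_{T₂}(s)| ≤ ε/(1−γ)², i.e. ‖V^π_{T₁} − V^π_{T₂}‖_∞ ≤ ε/(1−γ)². -/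
/-!
Fixing the policy turns both Bellman equations into equations `V = c + γ P V` of a Markov chain
`P`. Since a stochastic matrix does not increase the sup norm, any solution satisfies
`‖V‖ ≤ ‖c‖ / (1 - γ)`. Applied to `V₂` this gives `‖V₂‖ ≤ 1 / (1 - γ)`; applied to `V₁ - V₂`,
which solves such an equation for `P₁` with `c = γ (P₁ - P₂) V₂`, and `‖c‖ ≤ ε / (1 - γ)`,
it gives the bound `ε / (1 - γ)²`.
-/

open Finset

section

variable {S : Type*} [Fintype S]

theorem abs_sum_mul_le_sum_abs_mul_norm (w f : S → ℝ) :
    |∑ s, w s * f s| ≤ (∑ s, |w s|) * ‖f‖ :=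
  calc |∑ s, w s * f s| ≤ ∑ s, |w s * f s| := abs_sum_le_sum_abs _ _
    _ ≤ ∑ s, |w s| * ‖f‖ := by
        gcongr with s
        rw [abs_mul]
        gcongr
        exact norm_le_pi_norm f s
    _ = (∑ s, |w s|) * ‖f‖ := (sum_mul _ _ _).symm

theorem abs_sum_mul_le_norm_of_stochastic {p : S → ℝ} (hp0 : ∀ s, 0 ≤ p s)
    (hp1 : ∑ s, p s = 1) (f : S → ℝ) : |∑ s, p s * f s| ≤ ‖f‖ := by
  simpa [abs_of_nonneg (hp0 _), hp1] using abs_sum_mul_le_sum_abs_mul_norm p f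

theorem norm_le_div_of_bellman_eq [Nonempty S] {P : S → S → ℝ} (hP0 : ∀ s s', 0 ≤ P s s')
    (hP1 : ∀ s, ∑ s', P s s' = 1) {γ : ℝ} (hγ0 : 0 ≤ γ) (hγ1 : γ < 1) {c V : S → ℝ} {C : ℝ}
    (hc : ∀ s, |c s| ≤ C) (hV : ∀ s, V s = c s + γ * ∑ s', P s s' * V s') :
    ‖V‖ ≤ C / (1 - γ) := by
  have hC : 0 ≤ C := (abs_nonneg _).trans (hc (Classical.arbitrary S))
  have hrec : ‖V‖ ≤ C + γ * ‖V‖ := by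
    refine (pi_norm_le_iff_of_nonneg (by positivity)).2 fun s => ?_
    calc ‖V s‖ = |c s + γ * ∑ s', P s s' * V s'| := by rw [Real.norm_eq_abs, ← hV]
      _ ≤ |c s| + γ * |∑ s', P s s' * V s'| := by
          rw [← abs_of_nonneg hγ0, ← abs_mul, abs_of_nonneg hγ0]
          exact abs_add_le _ _
      _ ≤ C + γ * ‖V‖ := by
          gcongr
          exacts [hc s, abs_sum_mul_le_norm_of_stochastic (hP0 s) (hP1 s) V]
  rw [le_div_iff₀ (by linarith)]
  linarith

theorem bellman_eq_sub {P₁ P₂ : S → S → ℝ} {γ : ℝ} {c V₁ V₂ : S → ℝ}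
    (hV₁ : ∀ s, V₁ s = c s + γ * ∑ s', P₁ s s' * V₁ s')
    (hV₂ : ∀ s, V₂ s = c s + γ * ∑ s', P₂ s s' * V₂ s') (s : S) :
    (V₁ - V₂) s = γ * ∑ s', (P₁ s s' - P₂ s s') * V₂ s' + γ * ∑ s', P₁ s s' * (V₁ - V₂) s' := by
  simp only [Pi.sub_apply, sub_mul, mul_sub, sum_sub_distrib]
  rw [hV₁ s, hV₂ s]
  ring

end

theorem value_diff_le_of_kernel_close_general
    {S A : Type*} [Fintype S]
    (r : S → A → ℝ) (hr : ∀ s a, 0 ≤ r s a ∧ r s a ≤ 1)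
    (γ : ℝ) (hγ0 : 0 ≤ γ) (hγ1 : γ < 1)
    (T₁ T₂ : S → A → S → ℝ)
    (hT₁0 : ∀ s a s', 0 ≤ T₁ s a s') (hT₁1 : ∀ s a, ∑ s', T₁ s a s' = 1)
    (hT₂0 : ∀ s a s', 0 ≤ T₂ s a s') (hT₂1 : ∀ s a, ∑ s', T₂ s a s' = 1)
    (ε : ℝ) (hclose : ∀ s a, ∑ s', |T₁ s a s' - T₂ s a s'| ≤ ε)
    (π : S → A) (V₁ V₂ : S → ℝ)
    (hV₁ : ∀ s, V₁ s = r s (π s) + γ * ∑ s', T₁ s (π s) s' * V₁ s')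
    (hV₂ : ∀ s, V₂ s = r s (π s) + γ * ∑ s', T₂ s (π s) s' * V₂ s') :
    ∀ s, |V₁ s - V₂ s| ≤ ε / (1 - γ) ^ 2 := by
  intro s
  have : Nonempty S := ⟨s⟩
  have hε : 0 ≤ ε := (sum_nonneg fun _ _ => abs_nonneg _).trans (hclose s (π s))
  have hγ' : 0 < 1 - γ := by linarith
  have hV₂_le : ‖V₂‖ ≤ 1 / (1 - γ) :=
    norm_le_div_of_bellman_eq (fun s => hT₂0 s (π s)) (fun s => hT₂1 s (π s)) hγ0 hγ1
      (fun s => abs_le.2 ⟨by linarith [(hr s (π s)).1], (hr s (π s)).2⟩) hV₂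
  have hc : ∀ s, |γ * ∑ s', (T₁ s (π s) s' - T₂ s (π s) s') * V₂ s'| ≤ ε / (1 - γ) := fun s =>
    calc |γ * ∑ s', (T₁ s (π s) s' - T₂ s (π s) s') * V₂ s'|
        ≤ 1 * ((∑ s', |T₁ s (π s) s' - T₂ s (π s) s'|) * ‖V₂‖) := by
          rw [abs_mul, abs_of_nonneg hγ0]
          gcongr
          exact abs_sum_mul_le_sum_abs_mul_norm _ _
      _ ≤ 1 * (ε * (1 / (1 - γ))) := by gcongr; exact hclose s (π s)
      _ = ε / (1 - γ) := by ring
  calc |V₁ s - V₂ s| ≤ ‖V₁ - V₂‖ := norm_le_pi_norm (V₁ - V₂) s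
    _ ≤ ε / (1 - γ) / (1 - γ) :=
      norm_le_div_of_bellman_eq (fun s => hT₁0 s (π s)) (fun s => hT₁1 s (π s)) hγ0 hγ1 hc
        (bellman_eq_sub hV₁ hV₂)
    _ = ε / (1 - γ) ^ 2 := by rw [div_div, sq]

/-- **Value-function perturbation bound for a fixed policy.**
If two transition kernels `T₁`, `T₂` on a finite MDP with rewards in `[0,1]` and discount
`γ ∈ [0,1)` are `ε`-close in `L1` for every state-action pair, then for every deterministic
stationary policy `π` the corresponding value functions (characterised by their Bellman
equations) satisfy `|V₁ s - V₂ s| ≤ ε / (1 - γ)²` for every state `s`. -/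
theorem value_diff_le_of_kernel_close
    {S A : Type*} [Fintype S] [Nonempty S] [Fintype A] [Nonempty A]
    (r : S → A → ℝ) (hr : ∀ s a, 0 ≤ r s a ∧ r s a ≤ 1)
    (γ : ℝ) (hγ0 : 0 ≤ γ) (hγ1 : γ < 1)
    (T₁ T₂ : S → A → S → ℝ)
    (hT₁0 : ∀ s a s', 0 ≤ T₁ s a s') (hT₁1 : ∀ s a, ∑ s', T₁ s a s' = 1)
    (hT₂0 : ∀ s a s', 0 ≤ T₂ s a s') (hT₂1 : ∀ s a, ∑ s', T₂ s a s' = 1)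
    (ε : ℝ) (hclose : ∀ s a, ∑ s', |T₁ s a s' - T₂ s a s'| ≤ ε)
    (π : S → A) (V₁ V₂ : S → ℝ)
    (hV₁ : ∀ s, V₁ s = r s (π s) + γ * ∑ s', T₁ s (π s) s' * V₁ s')
    (hV₂ : ∀ s, V₂ s = r s (π s) + γ * ∑ s', T₂ s (π s) s' * V₂ s') :
    ∀ s, |V₁ s - V₂ s| ≤ ε / (1 - γ) ^ 2 :=
  value_diff_le_of_kernel_close_general r hr γ hγ0 hγ1 T₁ T₂ hT₁0 hT₁1 hT₂0 hT₂1 ε hclose π V₁ V₂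
    hV₁ hV₂
end

section
/- (Performance gap for non-realisable models.) Let S be a nonempty finite state space and A a nonempty finite action space, let r : S × A → ℝ be a reward function with r(s,a) ∈ [0,1] for all (s,a), and let γ ∈ [0,1) be a discount factor. Let T*, T, and T̂ be three transition kernels on (S, A) such that Σ_{s'∈S} |T*(s,a,s') − T(s,a,s')| ≤ ε_Realise and Σ_{s'∈S} |T(s,a,s') − T̂(s,a,s')| ≤ ε_Estim for every (s,a) ∈ S × A. Let π̂ : S → A be an optimal policy for the MDP with kernel T̂, i.e. V^{π̂}_{T̂}(s) = V*_{T̂}(s) for all s. Then the performance gap of π̂ in the MDP with kernel T* satisfies ‖V*_{T*} − V^{π̂}_{T*}‖_∞ ≤ 3(ε_Estim + ε_Realise)/(1−γ)². -/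
/-!
For a policy, the Bellman equation reads `V = ρ + γ • K *ᵥ V` with `K` row-stochastic, so `K` has
`ℓ∞`-operator norm at most `1` and `‖V‖ ≤ ‖ρ‖ / (1 - γ)`. Subtracting the equations for two kernels
gives `V₁ - V₂ = γ • ((K₁ - K₂) *ᵥ V₁ + K₂ *ᵥ (V₁ - V₂))`, hence the simulation lemma
`‖V₁ - V₂‖ ≤ γ ‖K₁ - K₂‖ ‖ρ‖ / (1 - γ)²`, where `‖K₁ - K₂‖` is the largest row-wise `ℓ¹` distance,
at most `ε_Estim + ε_Realise` for `T*` against `T̂`. So every policy, and therefore also the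
optimal value, moves by at most `D = (ε_Estim + ε_Realise) / (1 - γ)²` between `T*` and `T̂`, and
`V*_{T*} - V^{π̂}_{T*} = (V*_{T*} - V*_{T̂}) + (V^{π̂}_{T̂} - V^{π̂}_{T*})` is at most `2D`.
-/

open Finset Matrix

attribute [local instance] Matrix.linftyOpNormedAddCommGroup

lemma Matrix.linfty_opNorm_le_of_forall_sum_abs_le {m n : Type*} [Fintype m] [Fintype n]
    {A : Matrix m n ℝ} {c : ℝ} (hc : 0 ≤ c) (h : ∀ i, ∑ j, |A i j| ≤ c) : ‖A‖ ≤ c := by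
  rw [linfty_opNorm_def, ← NNReal.coe_mk c hc, NNReal.coe_le_coe]
  refine Finset.sup_le fun i _ => ?_
  rw [← NNReal.coe_le_coe, NNReal.coe_sum]
  simpa only [coe_nnnorm, Real.norm_eq_abs, NNReal.coe_mk] using h i

lemma Matrix.linfty_opNorm_le_one_of_mem_rowStochastic {n : Type*} [Fintype n] [DecidableEq n]
    {K : Matrix n n ℝ} (hK : K ∈ rowStochastic ℝ n) : ‖K‖ ≤ 1 :=
  linfty_opNorm_le_of_forall_sum_abs_le zero_le_one fun i => by
    simp only [abs_of_nonneg (nonneg_of_mem_rowStochastic hK), sum_row_of_mem_rowStochastic hK,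
      le_refl]

lemma abs_ciSup_sub_ciSup_le {ι : Type*} [Nonempty ι] {f g : ι → ℝ} {c : ℝ}
    (hf : BddAbove (Set.range f)) (hg : BddAbove (Set.range g)) (h : ∀ i, |f i - g i| ≤ c) :
    |(⨆ i, f i) - ⨆ i, g i| ≤ c := by
  rw [abs_sub_le_iff, sub_le_iff_le_add, sub_le_iff_le_add]
  constructor
  · exact ciSup_le fun i => by linarith [(abs_sub_le_iff.1 (h i)).1, le_ciSup hg i]
  · exact ciSup_le fun i => by linarith [(abs_sub_le_iff.1 (h i)).2, le_ciSup hf i]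

section ValueFunction

variable {S : Type*} [Fintype S] {γ : ℝ} {ρ V V₁ V₂ : S → ℝ} {K K₁ K₂ : Matrix S S ℝ}

lemma norm_le_div_of_eq_add_smul_mulVec (hγ0 : 0 ≤ γ) (hγ1 : γ < 1) (hK : ‖K‖ ≤ 1)
    (hV : V = ρ + γ • K *ᵥ V) : ‖V‖ ≤ ‖ρ‖ / (1 - γ) := by
  have hKV : ‖K *ᵥ V‖ ≤ ‖V‖ :=
    (linfty_opNorm_mulVec K V).trans (mul_le_of_le_one_left (norm_nonneg V) hK)
  have : ‖V‖ ≤ ‖ρ‖ + γ * ‖V‖ :=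
    calc ‖V‖ = ‖ρ + γ • K *ᵥ V‖ := congrArg norm hV
      _ ≤ ‖ρ‖ + γ * ‖K *ᵥ V‖ := by
        grw [norm_add_le, norm_smul, Real.norm_of_nonneg hγ0]
      _ ≤ ‖ρ‖ + γ * ‖V‖ := by gcongr
  rw [le_div_iff₀ (sub_pos.2 hγ1)]
  linarith

lemma norm_sub_le_of_eq_add_smul_mulVec (hγ0 : 0 ≤ γ) (hγ1 : γ < 1) (hK₁ : ‖K₁‖ ≤ 1)
    (hK₂ : ‖K₂‖ ≤ 1) (hV₁ : V₁ = ρ + γ • K₁ *ᵥ V₁) (hV₂ : V₂ = ρ + γ • K₂ *ᵥ V₂) :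
    ‖V₁ - V₂‖ ≤ γ * ‖K₁ - K₂‖ * ‖ρ‖ / (1 - γ) ^ 2 := by
  have hdecomp : V₁ - V₂ = γ • ((K₁ - K₂) *ᵥ V₁ + K₂ *ᵥ (V₁ - V₂)) :=
    calc V₁ - V₂ = (ρ + γ • K₁ *ᵥ V₁) - (ρ + γ • K₂ *ᵥ V₂) := congrArg₂ _ hV₁ hV₂
      _ = _ := by rw [sub_mulVec, mulVec_sub]; module
  have : ‖V₁ - V₂‖ ≤ γ * (‖K₁ - K₂‖ * ‖V₁‖ + ‖V₁ - V₂‖) :=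
    calc ‖V₁ - V₂‖ = γ * ‖(K₁ - K₂) *ᵥ V₁ + K₂ *ᵥ (V₁ - V₂)‖ := by
          rw [congrArg norm hdecomp, norm_smul, Real.norm_of_nonneg hγ0]
      _ ≤ γ * (‖(K₁ - K₂) *ᵥ V₁‖ + ‖K₂ *ᵥ (V₁ - V₂)‖) := by grw [norm_add_le]
      _ ≤ γ * (‖K₁ - K₂‖ * ‖V₁‖ + ‖V₁ - V₂‖) := by
          grw [linfty_opNorm_mulVec, linfty_opNorm_mulVec, hK₂, one_mul]
  have hγ : 0 < 1 - γ := sub_pos.2 hγ1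
  calc ‖V₁ - V₂‖ ≤ γ * (‖K₁ - K₂‖ * ‖V₁‖) / (1 - γ) := by
        rw [le_div_iff₀ hγ]; linarith
    _ ≤ γ * (‖K₁ - K₂‖ * (‖ρ‖ / (1 - γ))) / (1 - γ) := by
        grw [norm_le_div_of_eq_add_smul_mulVec hγ0 hγ1 hK₁ hV₁]
    _ = _ := by field_simp

end ValueFunction

section MDP

variable {S A : Type*} [Fintype S]

def policyKernel (T : S → A → S → ℝ) (π : S → A) : Matrix S S ℝ :=
  of fun s s' => T s (π s) s'

def policyReward (r : S → A → ℝ) (π : S → A) : S → ℝ :=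
  fun s => r s (π s)

lemma policyKernel_mem_rowStochastic [DecidableEq S] {T : S → A → S → ℝ}
    (hT0 : ∀ s a s', 0 ≤ T s a s') (hT1 : ∀ s a, ∑ s', T s a s' = 1) (π : S → A) :
    policyKernel T π ∈ rowStochastic ℝ S :=
  mem_rowStochastic_iff_sum.2 ⟨fun s => hT0 s (π s), fun s => hT1 s (π s)⟩

lemma norm_policyKernel_le_one {T : S → A → S → ℝ} (hT0 : ∀ s a s', 0 ≤ T s a s')
    (hT1 : ∀ s a, ∑ s', T s a s' = 1) (π : S → A) : ‖policyKernel T π‖ ≤ 1 := by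
  classical
  exact linfty_opNorm_le_one_of_mem_rowStochastic (policyKernel_mem_rowStochastic hT0 hT1 π)

lemma norm_policyKernel_sub_le {T₁ T₂ : S → A → S → ℝ} {ε : ℝ} (hε0 : 0 ≤ ε)
    (hε : ∀ s a, ∑ s', |T₁ s a s' - T₂ s a s'| ≤ ε) (π : S → A) :
    ‖policyKernel T₁ π - policyKernel T₂ π‖ ≤ ε :=
  linfty_opNorm_le_of_forall_sum_abs_le hε0 fun s => hε s (π s)

lemma norm_policyReward_le_one {r : S → A → ℝ} (hr : ∀ s a, 0 ≤ r s a ∧ r s a ≤ 1)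
    (π : S → A) : ‖policyReward r π‖ ≤ 1 :=
  (pi_norm_le_iff_of_nonneg zero_le_one).2 fun s =>
    (Real.norm_of_nonneg (hr s (π s)).1).trans_le (hr s (π s)).2

lemma eq_policyReward_add_smul_mulVec {r : S → A → ℝ} {γ : ℝ} {T : S → A → S → ℝ}
    {π : S → A} {V : S → ℝ} (hV : ∀ s, V s = r s (π s) + γ * ∑ s', T s (π s) s' * V s') :
    V = policyReward r π + γ • policyKernel T π *ᵥ V :=
  funext hV

lemma bddAbove_range_value {r : S → A → ℝ} (hr : ∀ s a, 0 ≤ r s a ∧ r s a ≤ 1) {γ : ℝ}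
    (hγ0 : 0 ≤ γ) (hγ1 : γ < 1) {T : S → A → S → ℝ} (hT0 : ∀ s a s', 0 ≤ T s a s')
    (hT1 : ∀ s a, ∑ s', T s a s' = 1) {V : (S → A) → S → ℝ}
    (hV : ∀ π s, V π s = r s (π s) + γ * ∑ s', T s (π s) s' * V π s') (s : S) :
    BddAbove (Set.range fun π => V π s) := by
  refine ⟨1 / (1 - γ), Set.forall_mem_range.2 fun π => ?_⟩
  calc V π s ≤ ‖V π‖ := (Real.le_norm_self _).trans (norm_le_pi_norm (V π) s)
    _ ≤ ‖policyReward r π‖ / (1 - γ) := norm_le_div_of_eq_add_smul_mulVec hγ0 hγ1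
        (norm_policyKernel_le_one hT0 hT1 π) (eq_policyReward_add_smul_mulVec (hV π))
    _ ≤ 1 / (1 - γ) := by grw [norm_policyReward_le_one hr π]; linarith

end MDP

theorem performance_gap_non_realisable_general
    {S A : Type*} [Fintype S]
    (r : S → A → ℝ) (hr : ∀ s a, 0 ≤ r s a ∧ r s a ≤ 1)
    (γ : ℝ) (hγ0 : 0 ≤ γ) (hγ1 : γ < 1)
    (Tstar T That : S → A → S → ℝ)
    (hTstar0 : ∀ s a s', 0 ≤ Tstar s a s') (hTstar1 : ∀ s a, ∑ s', Tstar s a s' = 1)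
    (hThat0 : ∀ s a s', 0 ≤ That s a s') (hThat1 : ∀ s a, ∑ s', That s a s' = 1)
    (εRealise εEstim : ℝ)
    (hRealise : ∀ s a, ∑ s', |Tstar s a s' - T s a s'| ≤ εRealise)
    (hEstim : ∀ s a, ∑ s', |T s a s' - That s a s'| ≤ εEstim)
    (Vs Vh : (S → A) → S → ℝ)
    (hVs : ∀ (π : S → A) (s : S),
      Vs π s = r s (π s) + γ * ∑ s', Tstar s (π s) s' * Vs π s')
    (hVh : ∀ (π : S → A) (s : S),
      Vh π s = r s (π s) + γ * ∑ s', That s (π s) s' * Vh π s')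
    (VstarS VstarH : S → ℝ)
    (hVstarS : ∀ s, VstarS s = ⨆ π : S → A, Vs π s)
    (hVstarH : ∀ s, VstarH s = ⨆ π : S → A, Vh π s)
    (πhat : S → A) (hπhat : ∀ s, Vh πhat s = VstarH s) :
    ∀ s, |VstarS s - Vs πhat s| ≤ 3 * (εEstim + εRealise) / (1 - γ) ^ 2 := by
  intro s
  have hR0 : 0 ≤ εRealise := (sum_nonneg fun _ _ => abs_nonneg _).trans (hRealise s (πhat s))
  have hE0 : 0 ≤ εEstim := (sum_nonneg fun _ _ => abs_nonneg _).trans (hEstim s (πhat s))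
  have hK : ∀ π, ‖policyKernel Tstar π - policyKernel That π‖ ≤ εEstim + εRealise := fun π =>
    (norm_sub_le_norm_sub_add_norm_sub _ (policyKernel T π) _).trans <| by
      grw [norm_policyKernel_sub_le hR0 hRealise π, norm_policyKernel_sub_le hE0 hEstim π,
        add_comm]
  set D := (εEstim + εRealise) / (1 - γ) ^ 2
  have hgap : ∀ π s, |Vs π s - Vh π s| ≤ D := fun π s => by
    have hsim := norm_sub_le_of_eq_add_smul_mulVec hγ0 hγ1
      (norm_policyKernel_le_one hTstar0 hTstar1 π) (norm_policyKernel_le_one hThat0 hThat1 π)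
      (eq_policyReward_add_smul_mulVec (hVs π)) (eq_policyReward_add_smul_mulVec (hVh π))
    grw [hK π, norm_policyReward_le_one hr π, mul_one, hγ1.le, one_mul] at hsim
    exact (norm_le_pi_norm (Vs π - Vh π) s).trans hsim
  have hopt : |VstarS s - VstarH s| ≤ D := by
    have : Nonempty (S → A) := ⟨πhat⟩
    rw [hVstarS, hVstarH]
    exact abs_ciSup_sub_ciSup_le (bddAbove_range_value hr hγ0 hγ1 hTstar0 hTstar1 hVs s)
      (bddAbove_range_value hr hγ0 hγ1 hThat0 hThat1 hVh s) fun π => hgap π s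
  have hhat : |VstarH s - Vs πhat s| ≤ D := by
    rw [← hπhat, abs_sub_comm]
    exact hgap πhat s
  have hD : 0 ≤ D := div_nonneg (add_nonneg hE0 hR0) (sq_nonneg _)
  calc |VstarS s - Vs πhat s| ≤ |VstarS s - VstarH s| + |VstarH s - Vs πhat s| :=
        abs_sub_le _ _ _
    _ ≤ 3 * D := by linarith
    _ = 3 * (εEstim + εRealise) / (1 - γ) ^ 2 := by rw [mul_div_assoc]

/-- **Performance gap for non-realisable models.**
Let `T*` be the true kernel, `T` a proxy kernel with `∑_{s'} |T*(s,a,s') − T(s,a,s')| ≤ ε_Realise`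
and `T̂` an estimate with `∑_{s'} |T(s,a,s') − T̂(s,a,s')| ≤ ε_Estim`, for every `(s,a)`.
If `π̂` is an optimal policy for the MDP with kernel `T̂`, then its performance gap in the MDP
with kernel `T*` satisfies `‖V*_{T*} − V^{π̂}_{T*}‖_∞ ≤ 3(ε_Estim + ε_Realise)/(1−γ)²`. -/
theorem performance_gap_non_realisable
    {S A : Type*} [Fintype S] [Nonempty S] [Fintype A] [Nonempty A]
    (r : S → A → ℝ) (hr : ∀ s a, 0 ≤ r s a ∧ r s a ≤ 1)
    (γ : ℝ) (hγ0 : 0 ≤ γ) (hγ1 : γ < 1)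
    (Tstar T That : S → A → S → ℝ)
    (hTstar0 : ∀ s a s', 0 ≤ Tstar s a s') (hTstar1 : ∀ s a, ∑ s', Tstar s a s' = 1)
    (hT0 : ∀ s a s', 0 ≤ T s a s') (hT1 : ∀ s a, ∑ s', T s a s' = 1)
    (hThat0 : ∀ s a s', 0 ≤ That s a s') (hThat1 : ∀ s a, ∑ s', That s a s' = 1)
    (εRealise εEstim : ℝ)
    (hRealise : ∀ s a, ∑ s', |Tstar s a s' - T s a s'| ≤ εRealise)
    (hEstim : ∀ s a, ∑ s', |T s a s' - That s a s'| ≤ εEstim)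
    (Vs Vh : (S → A) → S → ℝ)
    (hVs : ∀ (π : S → A) (s : S),
      Vs π s = r s (π s) + γ * ∑ s', Tstar s (π s) s' * Vs π s')
    (hVh : ∀ (π : S → A) (s : S),
      Vh π s = r s (π s) + γ * ∑ s', That s (π s) s' * Vh π s')
    (VstarS VstarH : S → ℝ)
    (hVstarS : ∀ s, VstarS s = ⨆ π : S → A, Vs π s)
    (hVstarH : ∀ s, VstarH s = ⨆ π : S → A, Vh π s)
    (πhat : S → A) (hπhat : ∀ s, Vh πhat s = VstarH s) :
    ∀ s, |VstarS s - Vs πhat s| ≤ 3 * (εEstim + εRealise) / (1 - γ) ^ 2 :=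
  performance_gap_non_realisable_general r hr γ hγ0 hγ1 Tstar T That hTstar0 hTstar1 hThat0 hThat1
    εRealise εEstim hRealise hEstim Vs Vh hVs hVh VstarS VstarH hVstarS hVstarH πhat hπhat
end

section
/- (Weissman-type L1 concentration of the empirical distribution.) Let p be a probability distribution on a finite set of cardinality S with S ≥ 2, let n ≥ 1, let X₁, …, Xₙ be i.i.d. samples from p, and let p̂ₙ be the empirical distribution, p̂ₙ(i) = (1/n)·#{k ≤ n : Xₖ = i}. Then for every δ ∈ (0,1], the probability that ‖p − p̂ₙ‖₁ ≥ √(2·log((2^S − 2)/δ)/n) is at most δ; consequently the probability that ‖p − p̂ₙ‖₁ ≥ √(2·S·log(2/δ)/n) is also at most δ. -/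
/-!
For a nonempty proper subset `A ⊆ I`, the number of samples falling in `A` is a sum of `n`
independent `[0, 1]`-valued variables with mean `p(A)`, so by Hoeffding's inequality it exceeds
`n p(A)` by `nε/2` with probability at most `exp(-nε²/2)`. Since `p̂ₙ - p` sums to zero, its
`ℓ¹`-norm is twice its mass on `A = {p̂ₙ > p}`; hence `‖p - p̂ₙ‖₁ ≥ ε` forces one of these
`2 ^ |I| - 2` events, and the union bound `(2 ^ |I| - 2) exp(-nε²/2)` equals `δ` for the chosen `ε`.
The second bound is weaker because `(2 ^ |I| - 2) / δ ≤ (2 / δ) ^ |I|`.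
-/

open MeasureTheory ProbabilityTheory Finset

theorem Finset.sum_abs_eq_two_mul_sum_filter_pos {ι R : Type*} [Ring R] [LinearOrder R]
    [IsOrderedRing R] {s : Finset ι} {d : ι → R} (hd : ∑ i ∈ s, d i = 0) :
    ∑ i ∈ s, |d i| = 2 * ∑ i ∈ s with 0 < d i, d i := by
  have hpos : ∑ i ∈ s with 0 < d i, |d i| = ∑ i ∈ s with 0 < d i, d i :=
    sum_congr rfl fun i hi => abs_of_pos (mem_filter.1 hi).2
  have hneg : ∑ i ∈ s with ¬0 < d i, |d i| = -∑ i ∈ s with ¬0 < d i, d i := by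
    rw [← sum_neg_distrib]
    exact sum_congr rfl fun i hi => abs_of_nonpos (not_lt.1 (mem_filter.1 hi).2)
  rw [← sum_filter_add_sum_filter_not s (0 < d ·)] at hd
  rw [← sum_filter_add_sum_filter_not s (0 < d ·), hpos, hneg, two_mul,
    eq_neg_of_add_eq_zero_right hd, neg_neg]

theorem Finset.card_univ_sdiff_empty_univ (I : Type*) [Fintype I] [DecidableEq I] :
    #((univ : Finset (Finset I)) \ {∅, univ}) = 2 ^ Fintype.card I - 2 := by
  rcases isEmpty_or_nonempty I with hI | hI
  · simp [eq_iff_true_of_subsingleton]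
  · rw [card_sdiff, card_univ, Fintype.card_finset, inter_univ,
      card_pair (univ_nonempty.ne_empty.symm)]

theorem exists_proper_subset_half_le_sum {I : Type*} [Fintype I] [DecidableEq I] {d : I → ℝ}
    (hd : ∑ i, d i = 0) {ε : ℝ} (hε : 0 < ε) (hεd : ε ≤ ∑ i, |d i|) :
    ∃ A ∈ (univ : Finset (Finset I)) \ {∅, univ}, ε / 2 ≤ ∑ i ∈ A, d i := by
  rw [sum_abs_eq_two_mul_sum_filter_pos hd] at hεd
  have hpos : 0 < ∑ i with 0 < d i, d i := by linarith
  refine ⟨({i | 0 < d i} : Finset I), ?_, by linarith⟩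
  simp only [mem_sdiff, mem_univ, mem_insert, mem_singleton, true_and, not_or]
  constructor
  · intro h; rw [h, sum_empty] at hpos; exact hpos.false
  · intro h; rw [h, hd] at hpos; exact hpos.false

noncomputable def empiricalFreq {I : Type*} [DecidableEq I] {n : ℕ} (x : Fin n → I) (i : I) : ℝ :=
  #{k | x k = i} / n

section
variable {I : Type*} [DecidableEq I] {n : ℕ}

theorem sum_indicator_one_eq_sum_card {ι : Type*} [Fintype ι] (x : ι → I) (A : Finset I) :
    ∑ k, (A : Set I).indicator (1 : I → ℝ) (x k) = ∑ i ∈ A, (#{k | x k = i} : ℝ) := by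
  simp only [Set.indicator_apply, mem_coe, Pi.one_apply, card_filter, Nat.cast_sum,
    Nat.cast_ite, Nat.cast_one, Nat.cast_zero]
  rw [sum_comm]
  simp [sum_ite_eq]

theorem mul_sum_empiricalFreq_sub (x : Fin n → I) (hn : n ≠ 0) (p : I → ℝ) (A : Finset I) :
    n * ∑ i ∈ A, (empiricalFreq x i - p i) =
      ∑ k, ((A : Set I).indicator 1 (x k) - ∑ i ∈ A, p i) := by
  have hn' : (n : ℝ) ≠ 0 := Nat.cast_ne_zero.2 hn
  rw [sum_sub_distrib, sum_sub_distrib, sum_indicator_one_eq_sum_card, mul_sub, mul_sum]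
  simp [empiricalFreq, mul_div_cancel₀ _ hn']

theorem sum_empiricalFreq [Fintype I] (x : Fin n → I) (hn : n ≠ 0) :
    ∑ i, empiricalFreq x i = 1 := by
  have h := mul_sum_empiricalFreq_sub x hn 0 univ
  simpa [hn] using h
end

section
variable {Ω I : Type*} [MeasurableSpace Ω] {P : Measure Ω} [IsProbabilityMeasure P]
  [MeasurableSpace I]

theorem measureReal_preimage_finset [MeasurableSingletonClass I] {Y : Ω → I} (hY : Measurable Y)
    {p : I → ℝ} (hp0 : ∀ i, 0 ≤ p i) (hdist : ∀ i, P {ω | Y ω = i} = ENNReal.ofReal (p i))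
    (A : Finset I) : P.real (Y ⁻¹' A) = ∑ i ∈ A, p i := by
  rw [← sum_measureReal_preimage_singleton A fun i _ => hY (measurableSet_singleton i)]
  exact sum_congr rfl fun i _ => by
    rw [measureReal_def, ← ENNReal.toReal_ofReal (hp0 i), ← hdist]
    rfl

theorem measureReal_sum_indicator_sub_ge_le {ι : Type*} [Fintype ι] {X : ι → Ω → I}
    (hX : ∀ k, Measurable (X k)) (hindep : iIndepFun X P) {A : Set I} (hA : MeasurableSet A)
    {q : ℝ} (hq : ∀ k, P.real (X k ⁻¹' A) = q) {t : ℝ} (ht : 0 ≤ t) :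
    P.real {ω | t ≤ ∑ k, (A.indicator 1 (X k ω) - q)} ≤
      Real.exp (-2 * t ^ 2 / Fintype.card ι) := by
  have hf : Measurable (A.indicator (1 : I → ℝ)) := measurable_one.indicator hA
  have hsubG : ∀ k ∈ univ, HasSubgaussianMGF (fun ω => A.indicator 1 (X k ω) - q)
      ((‖(1 : ℝ) - 0‖₊ / 2) ^ 2) P := by
    intro k _
    have hmean : P[fun ω => A.indicator (1 : I → ℝ) (X k ω)] = q := by
      simp_rw [← Set.indicator_comp_right, Pi.one_comp]
      rw [integral_indicator_one (hX k hA), hq]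
    have h := hasSubgaussianMGF_of_mem_Icc (X := fun ω => A.indicator (1 : I → ℝ) (X k ω))
      (a := 0) (b := 1) (hf.comp (hX k)).aemeasurable
      (ae_of_all P fun ω => ⟨Set.indicator_nonneg (fun _ _ => zero_le_one) _,
        Set.indicator_apply_le' (fun _ => le_rfl) (fun _ => zero_le_one)⟩)
    rwa [hmean] at h
  have h := HasSubgaussianMGF.measure_sum_ge_le_of_iIndepFun
    (hindep.comp (fun _ i => A.indicator 1 i - q) fun _ => hf.sub_const q) hsubG ht
  refine h.trans_eq ?_
  congr 1
  push_cast [sub_zero, nnnorm_one, sum_const, card_univ, nsmul_eq_mul]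
  ring
end

theorem measure_sum_abs_sub_empiricalFreq_ge_le {Ω I : Type*} [MeasurableSpace Ω]
    {P : Measure Ω} [IsProbabilityMeasure P] [Fintype I] [DecidableEq I] [MeasurableSpace I]
    [MeasurableSingletonClass I] {p : I → ℝ} (hp0 : ∀ i, 0 ≤ p i) (hp1 : ∑ i, p i = 1)
    {n : ℕ} (hn : n ≠ 0) {X : Fin n → Ω → I} (hX : ∀ k, Measurable (X k))
    (hindep : iIndepFun X P) (hdist : ∀ k i, P {ω | X k ω = i} = ENNReal.ofReal (p i))
    {ε : ℝ} (hε : 0 < ε) :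
    P {ω | ε ≤ ∑ i, |p i - empiricalFreq (fun k => X k ω) i|} ≤
      (2 ^ Fintype.card I - 2 : ℕ) * ENNReal.ofReal (Real.exp (-(n * ε ^ 2 / 2))) := by
  set 𝒜 : Finset (Finset I) := univ \ {∅, univ}
  set E : Finset I → Set Ω := fun A =>
    {ω | n * ε / 2 ≤ ∑ k, ((A : Set I).indicator 1 (X k ω) - ∑ i ∈ A, p i)}
  have hcover : {ω | ε ≤ ∑ i, |p i - empiricalFreq (fun k => X k ω) i|} ⊆ ⋃ A ∈ 𝒜, E A := by
    intro ω hω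
    set d : I → ℝ := fun i => empiricalFreq (fun k => X k ω) i - p i
    have hd : ∑ i, d i = 0 := by simp [d, sum_sub_distrib, sum_empiricalFreq _ hn, hp1]
    obtain ⟨A, hA, hAd⟩ :=
      exists_proper_subset_half_le_sum hd hε (by simpa [d, abs_sub_comm] using hω)
    refine Set.mem_biUnion hA ?_
    show (n : ℝ) * ε / 2 ≤ _
    rw [← mul_sum_empiricalFreq_sub _ hn, mul_div_assoc]
    exact mul_le_mul_of_nonneg_left hAd n.cast_nonneg
  have hE : ∀ A : Finset I, P (E A) ≤ ENNReal.ofReal (Real.exp (-(n * ε ^ 2 / 2))) := by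
    intro A
    rw [← ofReal_measureReal]
    refine ENNReal.ofReal_le_ofReal ((measureReal_sum_indicator_sub_ge_le hX hindep
      A.measurableSet (fun k => measureReal_preimage_finset (hX k) hp0 (hdist k) A)
      (by positivity)).trans_eq ?_)
    rw [Fintype.card_fin]
    field_simp
  calc P {ω | ε ≤ ∑ i, |p i - empiricalFreq (fun k => X k ω) i|}
      ≤ P (⋃ A ∈ 𝒜, E A) := measure_mono hcover
    _ ≤ ∑ A ∈ 𝒜, P (E A) := measure_biUnion_finset_le _ _
    _ ≤ ∑ A ∈ 𝒜, ENNReal.ofReal (Real.exp (-(n * ε ^ 2 / 2))) := sum_le_sum fun A _ => hE A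
    _ = _ := by rw [sum_const, card_univ_sdiff_empty_univ, nsmul_eq_mul]

theorem mul_exp_neg_mul_sq_sqrt_log_div {M δ n : ℝ} (hδ : 0 < δ) (hδM : δ ≤ M) (hn : 0 < n) :
    M * Real.exp (-(n * √(2 * Real.log (M / δ) / n) ^ 2 / 2)) = δ := by
  have hM : 0 < M := hδ.trans_le hδM
  have hlog : 0 ≤ Real.log (M / δ) := Real.log_nonneg ((one_le_div hδ).2 hδM)
  rw [Real.sq_sqrt (by positivity), mul_div_cancel₀ _ hn.ne', mul_div_cancel_left₀ _ two_ne_zero,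
    Real.exp_neg, Real.exp_log (div_pos hM hδ), inv_div, mul_div_cancel₀ _ hM.ne']

theorem four_le_two_pow {S : ℕ} (hS : 2 ≤ S) : (4 : ℝ) ≤ 2 ^ S :=
  le_of_eq_of_le (by norm_num) (pow_le_pow_right₀ one_le_two hS)

theorem log_two_pow_sub_two_div_le {S : ℕ} (hS : 2 ≤ S) {δ : ℝ} (hδ0 : 0 < δ) (hδ1 : δ ≤ 1) :
    Real.log ((2 ^ S - 2) / δ) ≤ S * Real.log (2 / δ) := by
  have h4 := four_le_two_pow hS
  rw [← Real.log_pow]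
  refine Real.log_le_log (div_pos (by linarith) hδ0) ?_
  calc (2 ^ S - 2) / δ ≤ 2 ^ S / δ := by gcongr; linarith
    _ ≤ 2 ^ S / δ ^ S := by gcongr; exact pow_le_of_le_one hδ0.le hδ1 (by omega)
    _ = (2 / δ) ^ S := (div_pow 2 δ S).symm

/-- **Weissman-type L1 concentration of the empirical distribution.**
Let `p` be a probability distribution on a finite set `I` with `|I| ≥ 2`, let `X₁, …, Xₙ`
(`n ≥ 1`) be i.i.d. samples from `p`, and let `p̂ₙ` be the empirical distribution,
`p̂ₙ i ω = #{k : Xₖ ω = i} / n`.  Then for every `δ ∈ (0,1]`,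
`P(‖p − p̂ₙ‖₁ ≥ √(2 log((2^|I| − 2)/δ)/n)) ≤ δ`, and consequently
`P(‖p − p̂ₙ‖₁ ≥ √(2·|I|·log(2/δ)/n)) ≤ δ`. -/
theorem weissman_L1_concentration
    {Ω : Type*} [MeasurableSpace Ω] (P : Measure Ω) [IsProbabilityMeasure P]
    {I : Type*} [Fintype I] [DecidableEq I] [MeasurableSpace I] [MeasurableSingletonClass I]
    (hI : 2 ≤ Fintype.card I)
    (p : I → ℝ) (hp0 : ∀ i, 0 ≤ p i) (hp1 : ∑ i, p i = 1)
    (n : ℕ) (hn : 1 ≤ n)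
    (X : Fin n → Ω → I) (hmeas : ∀ k, Measurable (X k))
    (hindep : iIndepFun X P)
    (hdist : ∀ k i, P {ω | X k ω = i} = ENNReal.ofReal (p i))
    (δ : ℝ) (hδ0 : 0 < δ) (hδ1 : δ ≤ 1) :
    P {ω | Real.sqrt (2 * Real.log (((2 : ℝ) ^ Fintype.card I - 2) / δ) / n) ≤
        ∑ i, |p i - ((Finset.univ.filter fun k => X k ω = i).card : ℝ) / n| }
      ≤ ENNReal.ofReal δ ∧
    P {ω | Real.sqrt (2 * Fintype.card I * Real.log (2 / δ) / n) ≤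
        ∑ i, |p i - ((Finset.univ.filter fun k => X k ω = i).card : ℝ) / n| }
      ≤ ENNReal.ofReal δ := by
  have hn0 : (0 : ℝ) < n := by exact_mod_cast hn
  have hδM : δ < 2 ^ Fintype.card I - 2 := by linarith [four_le_two_pow hI]
  have hM : ((2 ^ Fintype.card I - 2 : ℕ) : ℝ) = 2 ^ Fintype.card I - 2 := by
    rw [Nat.cast_sub (Nat.le_self_pow (by omega) 2), Nat.cast_pow, Nat.cast_ofNat]
  have hε : 0 < √(2 * Real.log ((2 ^ Fintype.card I - 2) / δ) / n) :=
    Real.sqrt_pos.2 (div_pos (mul_pos two_pos (Real.log_pos ((one_lt_div hδ0).2 hδM))) hn0)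
  have hfirst := (measure_sum_abs_sub_empiricalFreq_ge_le hp0 hp1 (by omega : n ≠ 0) hmeas hindep
    hdist hε).trans_eq (by
      rw [← ENNReal.ofReal_natCast, ← ENNReal.ofReal_mul (Nat.cast_nonneg _), hM,
        mul_exp_neg_mul_sq_sqrt_log_div hδ0 hδM.le hn0])
  refine ⟨hfirst, le_trans (measure_mono ?_) hfirst⟩
  intro ω hω
  rw [Set.mem_ofPred_eq] at hω ⊢
  refine le_trans (Real.sqrt_le_sqrt (div_le_div_of_nonneg_right ?_ hn0.le)) hω
  rw [mul_assoc]
  exact mul_le_mul_of_nonneg_left (log_two_pow_sub_two_div_le hI hδ0 hδ1) zero_le_two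
end
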